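/- There is a universal constant c > 0 such that the following holds for the online re-embedding model with two servers of capacity (1+ε)·n/2, where 0 < ε ≤ 0.98 and n = 2^a is a sufficiently large power of two (a ≥ 1000). For every deterministic online algorithm that always maintains a valid assignment, there exist an initial assignment and an input sequence σ on which the algorithm's total cost is at least c·α·n·log₂ n, while the optimal offline cost on that instance is at most O(α·n). Consequently every deterministic online algorithm has competitive ratio Ω(log n). -/

import Mathlib

open Finset

/-- Two vertices lie in the same connected component revealed by the edge list `E`:
the reflexive-symmetric-transitive closure of the revealed edge relation. -/
def sameComp {n : ℕ} (E : List (Fin n × Fin n)) (u v : Fin n) : Prop :=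
  Relation.EqvGen (fun a b => (a, b) ∈ E ∨ (b, a) ∈ E) u v

/-- An instance of the online re-embedding problem with `n` vertices and `ℓ` servers:
a ground-truth partition into components of size `n/ℓ`, a perfectly balanced initial
assignment, and an online edge sequence each of whose edges joins two vertices of the
same ground-truth component and whose revealed connected components are exactly the
ground-truth components. -/
structure ReInstance (n ℓ : ℕ) where
  truth : Fin n → Fin ℓ
  init : Fin n → Fin ℓ
  sigma : List (Fin n × Fin n)
  truth_size : ∀ j, (Finset.univ.filter fun v => truth v = j).card = n / ℓ
  init_size : ∀ j, (Finset.univ.filter fun v => init v = j).card = n / ℓ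
  edges_within : ∀ e ∈ sigma, truth e.1 = truth e.2
  reveals : ∀ u v, sameComp sigma u v ↔ truth u = truth v

/-- A deterministic online algorithm: given the initial assignment and the prefix of the
edge sequence revealed so far, it produces the current assignment of vertices to servers. -/
abbrev OnlineAlg (n ℓ : ℕ) := (Fin n → Fin ℓ) → List (Fin n × Fin n) → Fin n → Fin ℓ

/-- The assignment maintained by online algorithm `A` after `t` requests of `σ` have been
processed (the assignment is `a0` before any request). -/
def state {n ℓ : ℕ} (A : OnlineAlg n ℓ) (a0 : Fin n → Fin ℓ)
    (σ : List (Fin n × Fin n)) : ℕ → Fin n → Fin ℓ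
  | 0 => a0
  | t + 1 => A a0 (σ.take (t + 1))

/-- The number of vertices reassigned when changing assignment `f` into assignment `g`. -/
def movesBetween {n ℓ : ℕ} (f g : Fin n → Fin ℓ) : ℕ :=
  (Finset.univ.filter fun v => f v ≠ g v).card

/-- Total number of vertex moves performed by online algorithm `A` on the instance. -/
def algMoves {n ℓ : ℕ} (A : OnlineAlg n ℓ) (a0 : Fin n → Fin ℓ)
    (σ : List (Fin n × Fin n)) : ℕ :=
  ∑ t ∈ Finset.range σ.length,
    movesBetween (state A a0 σ t) (state A a0 σ (t + 1))

/-- Total communication cost of online algorithm `A`: one unit for every request whose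
endpoints are on different servers at the time of the request. -/
def algComm {n ℓ : ℕ} (A : OnlineAlg n ℓ) (a0 : Fin n → Fin ℓ)
    (σ : List (Fin n × Fin n)) : ℕ :=
  ∑ t : Fin σ.length,
    if state A a0 σ t.val (σ.get t).1 ≠ state A a0 σ t.val (σ.get t).2 then 1 else 0

/-- Total cost of online algorithm `A`: `α` per vertex move plus the communication cost. -/
def algCost {n ℓ : ℕ} (α : ℝ) (A : OnlineAlg n ℓ) (a0 : Fin n → Fin ℓ)
    (σ : List (Fin n × Fin n)) : ℝ :=
  α * algMoves A a0 σ + algComm A a0 σ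

/-- An assignment is valid for augmentation `ε`: each server load is at most `(1+ε)·n/ℓ`. -/
def validCap {n ℓ : ℕ} (ε : ℝ) (f : Fin n → Fin ℓ) : Prop :=
  ∀ j, ((Finset.univ.filter fun v => f v = j).card : ℝ) ≤ (1 + ε) * n / ℓ

/-- An assignment is a perfect partitioning: its classes are exactly the
ground-truth components, i.e. each ground-truth component is alone on one server. -/
def isPerfect {n ℓ : ℕ} (truth f : Fin n → Fin ℓ) : Prop :=
  ∀ u v, f u = f v ↔ truth u = truth v

/-- `f` assigns all vertices of each connected component revealed by `E` to one server. -/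
def collocates {n ℓ : ℕ} (E : List (Fin n × Fin n)) (f : Fin n → Fin ℓ) : Prop :=
  ∀ u v, sameComp E u v → f u = f v

/-- Number of vertex moves of an offline schedule `g` (which may also move vertices
before the first request). -/
def schedMoves {n ℓ : ℕ} (a0 : Fin n → Fin ℓ) (σ : List (Fin n × Fin n))
    (g : ℕ → Fin n → Fin ℓ) : ℕ :=
  movesBetween a0 (g 0) +
    ∑ t ∈ Finset.range σ.length, movesBetween (g t) (g (t + 1))

/-- Communication cost of an offline schedule `g`. -/
def schedComm {n ℓ : ℕ} (σ : List (Fin n × Fin n)) (g : ℕ → Fin n → Fin ℓ) : ℕ :=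
  ∑ t : Fin σ.length, if g t.val (σ.get t).1 ≠ g t.val (σ.get t).2 then 1 else 0

/-- The optimal offline cost: the infimum cost over all offline schedules which respect
the capacity `(1+ε)·n/ℓ` at all times and end with a perfect partitioning. -/
noncomputable def OPTcost {n ℓ : ℕ} (α ε : ℝ) (I : ReInstance n ℓ) : ℝ :=
  sInf { c : ℝ | ∃ g : ℕ → Fin n → Fin ℓ,
    (∀ t, validCap ε (g t)) ∧ isPerfect I.truth (g I.sigma.length) ∧
    c = α * schedMoves I.init I.sigma g + schedComm I.sigma g }

/-- The minimum number of vertex moves of any offline schedule which respects the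
capacity `(1+ε)·n/ℓ` at all times and ends with a perfect partitioning. -/
noncomputable def OPTmoves {n ℓ : ℕ} (ε : ℝ) (I : ReInstance n ℓ) : ℕ :=
  sInf { m : ℕ | ∃ g : ℕ → Fin n → Fin ℓ,
    (∀ t, validCap ε (g t)) ∧ isPerfect I.truth (g I.sigma.length) ∧
    m = schedMoves I.init I.sigma g }

/-!
The adversary starts from singleton components and runs `log₂ n - 1` levels; in the level with
components of size `s` it merges them in pairs. Call an ordered pair `(C, D)` paid if `C` has at
least `δ s` vertices on server 1 and `D` at least `δ s` on server 0. Before joining a pair the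
adversary keeps requesting edges of `C ∪ D` that cross the servers, until `C ∪ D` lies on one
server or `⌈α δ s⌉` requests were made; so the algorithm pays at least `α δ s` for a paid pair.
Paid pairs are merged first. Once none is left, all unmerged components are light on one common
server, and as that server holds at least `(1 - ε) n / 2` vertices, the merged components already
cover `Ω(n)` vertices: `Ω(n / s)` merges were paid. Every level thus costs `Ω(α n)`, in total
`Ω(α n log n)`, whereas the offline algorithm moves each vertex at most once, to its final
server, and never communicates.
-/

namespace ReEmbedding

variable {n ℓ : ℕ}

section Bookkeeping

variable (A : OnlineAlg n ℓ) (a0 : Fin n → Fin ℓ)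

def stateAfter (σ : List (Fin n × Fin n)) : Fin n → Fin ℓ := state A a0 σ σ.length

variable {A a0}

lemma state_append (σ τ : List (Fin n × Fin n)) {t : ℕ} (ht : t ≤ σ.length) :
    state A a0 (σ ++ τ) t = state A a0 σ t := by
  cases t with
  | zero => rfl
  | succ t => simp only [state, List.take_append_of_le_length ht]

lemma stateAfter_eq_state_of_prefix {σ σ' : List (Fin n × Fin n)} (h : σ <+: σ') :
    stateAfter A a0 σ = state A a0 σ' σ.length := by
  obtain ⟨τ, rfl⟩ := h
  exact (state_append σ τ le_rfl).symm

lemma movesBetween_eq_hammingDist (f g : Fin n → Fin ℓ) : movesBetween f g = hammingDist f g :=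
  rfl

lemma algMoves_append_singleton (σ : List (Fin n × Fin n)) (e : Fin n × Fin n) :
    algMoves A a0 (σ ++ [e]) =
      algMoves A a0 σ + movesBetween (stateAfter A a0 σ) (stateAfter A a0 (σ ++ [e])) := by
  rw [algMoves, List.length_append, List.length_singleton, sum_range_succ, algMoves,
    stateAfter, stateAfter, state_append σ [e] le_rfl]
  congr 1
  · refine sum_congr rfl fun t ht => ?_
    have ht := mem_range.mp ht
    rw [state_append σ [e] ht.le, state_append σ [e] ht]
  · simp

lemma algComm_append_singleton (σ : List (Fin n × Fin n)) (e : Fin n × Fin n) :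
    algComm A a0 (σ ++ [e]) = algComm A a0 σ +
      if stateAfter A a0 σ e.1 ≠ stateAfter A a0 σ e.2 then 1 else 0 := by
  have hlen : (σ ++ [e]).length = σ.length + 1 := by simp
  rw [algComm, algComm, ← (finCongr hlen).symm.sum_comp, Fin.sum_univ_castSucc]
  congr 1
  · refine Fintype.sum_congr _ _ fun t => ?_
    simp [state_append σ [e] t.isLt.le, List.getElem_append_left t.isLt]
  · simp only [finCongr_symm, finCongr_apply, Fin.val_cast, Fin.val_last, List.get_eq_getElem,
      Std.le_refl, List.getElem_append_right, tsub_self, List.getElem_cons_zero,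
      state_append σ [e] le_rfl, stateAfter]
    congr

lemma algCost_append_singleton (α : ℝ) (σ : List (Fin n × Fin n)) (e : Fin n × Fin n) :
    algCost α A a0 (σ ++ [e]) = algCost α A a0 σ
      + α * movesBetween (stateAfter A a0 σ) (stateAfter A a0 (σ ++ [e]))
      + if stateAfter A a0 σ e.1 ≠ stateAfter A a0 σ e.2 then 1 else 0 := by
  rw [algCost, algCost, algMoves_append_singleton, algComm_append_singleton]
  split_ifs <;> push_cast <;> ring

lemma algCost_nil (α : ℝ) : algCost α A a0 [] = 0 := by
  simp [algCost, algMoves, algComm]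

variable {α : ℝ}

lemma algCost_add_le_algCost_append (hα : 0 ≤ α) (σ τ : List (Fin n × Fin n)) :
    algCost α A a0 σ + α * movesBetween (stateAfter A a0 σ) (stateAfter A a0 (σ ++ τ)) ≤
      algCost α A a0 (σ ++ τ) := by
  induction τ using List.reverseRecOn with
  | nil => simp [movesBetween_eq_hammingDist]
  | append_singleton τ e ih =>
    rw [← List.append_assoc, algCost_append_singleton]
    have htri : (movesBetween (stateAfter A a0 σ) (stateAfter A a0 (σ ++ τ ++ [e])) : ℝ) ≤
        movesBetween (stateAfter A a0 σ) (stateAfter A a0 (σ ++ τ)) +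
          movesBetween (stateAfter A a0 (σ ++ τ)) (stateAfter A a0 (σ ++ τ ++ [e])) := by
      simp only [movesBetween_eq_hammingDist]
      exact_mod_cast hammingDist_triangle _ _ _
    have hcomm : (0 : ℝ) ≤ if stateAfter A a0 (σ ++ τ) e.1 ≠ stateAfter A a0 (σ ++ τ) e.2
        then 1 else 0 := by positivity
    linarith [mul_le_mul_of_nonneg_left htri hα]

lemma algCost_mono (hα : 0 ≤ α) {σ σ' : List (Fin n × Fin n)} (h : σ <+: σ') :
    algCost α A a0 σ ≤ algCost α A a0 σ' := by
  obtain ⟨τ, rfl⟩ := h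
  have := algCost_add_le_algCost_append (A := A) (a0 := a0) hα σ τ
  have : (0 : ℝ) ≤ α * movesBetween (stateAfter A a0 σ) (stateAfter A a0 (σ ++ τ)) := by
    positivity
  linarith

end Bookkeeping

section Load

def load (f : Fin n → Fin ℓ) (j : Fin ℓ) (C : Finset (Fin n)) : ℕ := #{v ∈ C | f v = j}

lemma load_mono (f : Fin n → Fin ℓ) (j : Fin ℓ) {C D : Finset (Fin n)} (h : C ⊆ D) :
    load f j C ≤ load f j D :=
  card_le_card (filter_subset_filter _ h)

lemma load_zero_add_load_one (f : Fin n → Fin 2) (C : Finset (Fin n)) :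
    load f 0 C + load f 1 C = #C := by
  rw [load, load, ← card_filter_add_card_filter_not (s := C) (fun v => f v = 0)]
  congr 2
  exact filter_congr fun v _ => by generalize f v = x; fin_cases x <;> simp

lemma min_load_le_movesBetween (f g : Fin n → Fin 2) {S : Finset (Fin n)}
    (hg : ∀ u ∈ S, ∀ v ∈ S, g u = g v) :
    min (load f 0 S) (load f 1 S) ≤ movesBetween f g := by
  rcases S.eq_empty_or_nonempty with rfl | ⟨w, hw⟩
  · simp [load]
  have moved : ∀ j, g w ≠ j → load f j S ≤ movesBetween f g := fun j hj =>
    card_le_card fun v hv => by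
      simp only [mem_filter, mem_univ, true_and] at hv ⊢
      rw [hv.2, hg v hv.1 w hw]
      exact Ne.symm hj
  by_cases h0 : g w = 0
  · exact (min_le_right _ _).trans (moved 1 (by rw [h0]; decide))
  · exact (min_le_left _ _).trans (moved 0 h0)

lemma load_ge_of_validCap {ε : ℝ} {f : Fin n → Fin 2} (hf : validCap ε f) (j : Fin 2) :
    (1 - ε) * n / 2 ≤ (load f j univ : ℝ) := by
  have htotal : load f j univ + load f (j + 1) univ = n := by
    have h := load_zero_add_load_one f univ
    rw [card_univ, Fintype.card_fin] at h
    fin_cases j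
    · exact h
    · simpa [add_comm] using h
  have hcap := hf (j + 1)
  rw [Nat.cast_ofNat] at hcap
  change (load f (j + 1) univ : ℝ) ≤ _ at hcap
  have : (load f j univ : ℝ) + load f (j + 1) univ = n := by exact_mod_cast htotal
  linarith

end Load

section Hammer

variable (A : OnlineAlg n 2) (a0 : Fin n → Fin 2)

open Classical in
noncomputable def hammer (S : Finset (Fin n)) : ℕ → List (Fin n × Fin n) → List (Fin n × Fin n)
  | 0, σ => σ
  | T + 1, σ =>
    if h : ∃ p : Fin n × Fin n,
        p.1 ∈ S ∧ p.2 ∈ S ∧ stateAfter A a0 σ p.1 ≠ stateAfter A a0 σ p.2 then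
      hammer S T (σ ++ [h.choose])
    else σ

variable {A a0}

lemma prefix_hammer (S : Finset (Fin n)) (T : ℕ) (σ : List (Fin n × Fin n)) :
    σ <+: hammer A a0 S T σ := by
  induction T generalizing σ with
  | zero => exact List.prefix_refl σ
  | succ T ih =>
    rw [hammer]
    split_ifs
    · exact (List.prefix_append σ _).trans (ih _)
    · exact List.prefix_refl σ

lemma mem_hammer {S : Finset (Fin n)} {T : ℕ} {σ : List (Fin n × Fin n)} {e : Fin n × Fin n}
    (he : e ∈ hammer A a0 S T σ) : e ∈ σ ∨ e.1 ∈ S ∧ e.2 ∈ S := by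
  induction T generalizing σ with
  | zero => exact Or.inl he
  | succ T ih =>
    rw [hammer] at he
    split_ifs at he with h
    · rcases ih he with he | he
      · rcases List.mem_append.mp he with he | he
        · exact Or.inl he
        · rw [List.mem_singleton.mp he]
          exact Or.inr ⟨h.choose_spec.1, h.choose_spec.2.1⟩
      · exact Or.inr he
    · exact Or.inl he

lemma algCost_hammer_or_unsplit {α : ℝ} (hα : 0 ≤ α) (S : Finset (Fin n)) (T : ℕ)
    (σ : List (Fin n × Fin n)) :
    algCost α A a0 σ + T ≤ algCost α A a0 (hammer A a0 S T σ) ∨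
      ∀ u ∈ S, ∀ v ∈ S, stateAfter A a0 (hammer A a0 S T σ) u =
        stateAfter A a0 (hammer A a0 S T σ) v := by
  induction T generalizing σ with
  | zero => simp [hammer]
  | succ T ih =>
    rw [hammer]
    split_ifs with h
    · refine (ih _).imp_left fun hT => ?_
      have hstep := algCost_append_singleton (A := A) (a0 := a0) α σ h.choose
      rw [if_pos h.choose_spec.2.2] at hstep
      have : (0 : ℝ) ≤ α * movesBetween (stateAfter A a0 σ) (stateAfter A a0 (σ ++ [h.choose])) :=
        by positivity
      push_cast
      linarith
    · push Not at h
      exact Or.inr fun u hu v hv => h (u, v) hu hv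

lemma algCost_hammer {α : ℝ} (hα : 0 ≤ α) (S : Finset (Fin n)) (T : ℕ)
    (σ : List (Fin n × Fin n)) :
    algCost α A a0 σ + min (T : ℝ) (α * min (load (stateAfter A a0 σ) 0 S)
        (load (stateAfter A a0 σ) 1 S)) ≤ algCost α A a0 (hammer A a0 S T σ) := by
  rcases algCost_hammer_or_unsplit hα S T σ with hT | hS
  · linarith [min_le_left (T : ℝ) (α * min (load (stateAfter A a0 σ) 0 S)
      (load (stateAfter A a0 σ) 1 S))]
  · obtain ⟨τ, hτ⟩ := prefix_hammer (A := A) (a0 := a0) S T σ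
    have hmoves := algCost_add_le_algCost_append (A := A) (a0 := a0) hα σ τ
    rw [hτ] at hmoves
    have hmin : ((min (load (stateAfter A a0 σ) 0 S) (load (stateAfter A a0 σ) 1 S) : ℕ) : ℝ) ≤
        movesBetween (stateAfter A a0 σ) (stateAfter A a0 (hammer A a0 S T σ)) := by
      exact_mod_cast min_load_le_movesBetween _ _ hS
    nlinarith [min_le_right (T : ℝ) (α * min (load (stateAfter A a0 σ) 0 S)
      (load (stateAfter A a0 σ) 1 S)), mul_le_mul_of_nonneg_left hmin hα]

end Hammer

section Components

lemma sameComp_mono {σ σ' : List (Fin n × Fin n)} (h : σ ⊆ σ') {u v : Fin n}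
    (huv : sameComp σ u v) : sameComp σ' u v :=
  Relation.EqvGen.mono (fun _ _ => Or.imp (fun he => h he) (fun he => h he)) u v huv

structure IsComponents (σ : List (Fin n × Fin n)) (P : Finset (Finset (Fin n))) : Prop where
  pairwiseDisjoint : (P : Set (Finset (Fin n))).PairwiseDisjoint id
  cover : ∀ v, ∃ C ∈ P, v ∈ C
  connected : ∀ C ∈ P, ∀ u ∈ C, ∀ v ∈ C, sameComp σ u v
  edge_mem : ∀ e ∈ σ, ∃ C ∈ P, e.1 ∈ C ∧ e.2 ∈ C

namespace IsComponents

variable {σ : List (Fin n × Fin n)} {P : Finset (Finset (Fin n))}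

lemma singletons : IsComponents [] (univ.image fun v : Fin n => ({v} : Finset (Fin n))) where
  pairwiseDisjoint := by
    intro X hX Y hY huv
    obtain ⟨u, -, rfl⟩ := mem_image.mp hX
    obtain ⟨v, -, rfl⟩ := mem_image.mp hY
    exact disjoint_singleton.mpr fun h => huv (h ▸ rfl)
  cover v := ⟨{v}, mem_image_of_mem _ (mem_univ v), mem_singleton_self v⟩
  connected := by
    rintro _ hC u hu v hv
    obtain ⟨w, -, rfl⟩ := mem_image.mp hC
    rw [mem_singleton.mp hu, mem_singleton.mp hv]
    exact Relation.EqvGen.refl w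
  edge_mem e he := absurd he List.not_mem_nil

lemma biUnion_eq_univ (hP : IsComponents σ P) : P.biUnion id = univ :=
  eq_univ_of_forall fun v => mem_biUnion.mpr (hP.cover v)

lemma sum_card (hP : IsComponents σ P) : ∑ C ∈ P, #C = n := by
  simpa [hP.biUnion_eq_univ] using (card_biUnion hP.pairwiseDisjoint).symm

lemma load_univ (hP : IsComponents σ P) (f : Fin n → Fin ℓ) (j : Fin ℓ) :
    load f j univ = ∑ C ∈ P, load f j C := by
  rw [← hP.biUnion_eq_univ, load, filter_biUnion,
    card_biUnion (hP.pairwiseDisjoint.mono fun _ => filter_subset _ _)]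
  rfl

lemma sameComp_iff (hP : IsComponents σ P) {C : Finset (Fin n)} (hC : C ∈ P) {u : Fin n}
    (hu : u ∈ C) (v : Fin n) : sameComp σ u v ↔ v ∈ C := by
  refine ⟨fun huv => ?_, hP.connected C hC u hu v⟩
  have edge_closed : ∀ {x y}, (x, y) ∈ σ → (x ∈ C ↔ y ∈ C) := fun {x y} hxy => by
    obtain ⟨X, hX, hx, hy⟩ := hP.edge_mem _ hxy
    by_cases hXC : X = C
    · subst hXC; exact iff_of_true hx hy
    · have hdisj := hP.pairwiseDisjoint hX hC hXC
      exact iff_of_false (disjoint_left.mp hdisj hx) (disjoint_left.mp hdisj hy)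
  suffices ∀ x y, sameComp σ x y → (x ∈ C ↔ y ∈ C) from (this u v huv).mp hu
  intro x y hxy
  induction hxy with
  | rel x y h => exact h.elim edge_closed (fun h => (edge_closed h).symm)
  | refl => rfl
  | symm _ _ _ ih => exact ih.symm
  | trans _ _ _ _ _ ih₁ ih₂ => exact ih₁.trans ih₂

lemma merge (hP : IsComponents σ P) {C D : Finset (Fin n)} (hC : C ∈ P) (hD : D ∈ P)
    {σ' : List (Fin n × Fin n)} (hσ : σ ⊆ σ')
    (hedges : ∀ e ∈ σ', e ∈ σ ∨ e.1 ∈ C ∪ D ∧ e.2 ∈ C ∪ D)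
    (hlink : ∃ c ∈ C, ∃ d ∈ D, sameComp σ' c d) :
    IsComponents σ' (insert (C ∪ D) ((P.erase C).erase D)) := by
  have mem_iff : ∀ X, X ∈ insert (C ∪ D) ((P.erase C).erase D) ↔
      X = C ∪ D ∨ X ≠ D ∧ X ≠ C ∧ X ∈ P := by simp
  have coarsen : ∀ X ∈ P, ∃ Y ∈ insert (C ∪ D) ((P.erase C).erase D), X ⊆ Y := by
    intro X hX
    by_cases hXC : X = C
    · exact ⟨C ∪ D, mem_insert_self _ _, hXC ▸ subset_union_left⟩
    by_cases hXD : X = D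
    · exact ⟨C ∪ D, mem_insert_self _ _, hXD ▸ subset_union_right⟩
    exact ⟨X, (mem_iff X).mpr (Or.inr ⟨hXD, hXC, hX⟩), subset_rfl⟩
  obtain ⟨c, hc, d, hd, hcd⟩ := hlink
  have to_c : ∀ x ∈ C ∪ D, sameComp σ' x c := by
    intro x hx
    rcases mem_union.mp hx with hx | hx
    · exact sameComp_mono hσ (hP.connected C hC x hx c hc)
    · exact .trans _ _ _ (sameComp_mono hσ (hP.connected D hD x hx d hd)) (.symm _ _ hcd)
  refine ⟨?_, fun v => ?_, fun X hX u hu v hv => ?_, fun e he => ?_⟩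
  · rw [coe_insert, coe_erase, coe_erase]
    refine (hP.pairwiseDisjoint.subset (by grind)).insert fun X hX hne => ?_
    simp only [Set.mem_sdiff, Set.mem_singleton_iff, mem_coe] at hX
    exact disjoint_union_left.mpr ⟨hP.pairwiseDisjoint hC hX.1.1 (Ne.symm hX.1.2),
      hP.pairwiseDisjoint hD hX.1.1 (Ne.symm hX.2)⟩
  · obtain ⟨X, hX, hv⟩ := hP.cover v
    obtain ⟨Y, hY, hXY⟩ := coarsen X hX
    exact ⟨Y, hY, hXY hv⟩
  · rcases (mem_iff X).mp hX with rfl | ⟨-, -, hX⟩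
    · exact .trans _ _ _ (to_c u hu) (.symm _ _ (to_c v hv))
    · exact sameComp_mono hσ (hP.connected X hX u hu v hv)
  · rcases hedges e he with he | he
    · obtain ⟨X, hX, he₁, he₂⟩ := hP.edge_mem e he
      obtain ⟨Y, hY, hXY⟩ := coarsen X hX
      exact ⟨Y, hY, hXY he₁, hXY he₂⟩
    · exact ⟨C ∪ D, mem_insert_self _ _, he⟩

end IsComponents

end Components

section Level

structure LevelInv (s : ℕ) (U M : Finset (Finset (Fin n))) (σ : List (Fin n × Fin n)) : Prop where
  components : IsComponents σ (U ∪ M)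
  card_unmerged : ∀ C ∈ U, #C = s
  card_merged : ∀ C ∈ M, #C = 2 * s

namespace LevelInv

variable {s : ℕ} {U M : Finset (Finset (Fin n))} {σ : List (Fin n × Fin n)}

lemma of_isComponents {P : Finset (Finset (Fin n))} (hP : IsComponents σ P)
    (hcard : ∀ C ∈ P, #C = s) : LevelInv s P ∅ σ :=
  ⟨by rwa [union_empty], hcard, by simp⟩

lemma isComponents {P : Finset (Finset (Fin n))} (h : LevelInv s P ∅ σ) : IsComponents σ P := by
  simpa using h.components

lemma next (h : LevelInv s ∅ M σ) : LevelInv (2 * s) M ∅ σ :=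
  of_isComponents (by simpa using h.components) h.card_merged

lemma mul_card {P : Finset (Finset (Fin n))} (h : LevelInv s P ∅ σ) : s * #P = n :=
  calc s * #P = ∑ C ∈ P, #C := by
        rw [sum_congr rfl h.card_unmerged, sum_const, smul_eq_mul, mul_comm]
    _ = n := h.isComponents.sum_card

lemma disjoint (h : LevelInv s U M σ) (hs : 0 < s) : Disjoint U M :=
  disjoint_left.mpr fun C hCU hCM => by
    have := h.card_merged C hCM
    rw [h.card_unmerged C hCU] at this
    omega

lemma mul_card_le (h : LevelInv s U M σ) : s * #U ≤ n :=
  calc s * #U = ∑ C ∈ U, #C := by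
        rw [sum_congr rfl h.card_unmerged, sum_const, smul_eq_mul, mul_comm]
    _ ≤ ∑ C ∈ U ∪ M, #C := sum_le_sum_of_subset subset_union_left
    _ = n := h.components.sum_card

lemma merge (h : LevelInv s U M σ) (hs : 0 < s) {C D : Finset (Fin n)} (hC : C ∈ U)
    (hD : D ∈ U) (hCD : C ≠ D) {σ' : List (Fin n × Fin n)} (hσ : σ ⊆ σ')
    (hedges : ∀ e ∈ σ', e ∈ σ ∨ e.1 ∈ C ∪ D ∧ e.2 ∈ C ∪ D)
    (hlink : ∃ c ∈ C, ∃ d ∈ D, sameComp σ' c d) :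
    LevelInv s ((U.erase C).erase D) (insert (C ∪ D) M) σ' ∧
      #(insert (C ∪ D) M) = #M + 1 := by
  have not_merged : ∀ X ∈ U, X ∉ M := fun _ hX => disjoint_left.mp (h.disjoint hs) hX
  have hunion : (U.erase C).erase D ∪ insert (C ∪ D) M =
      insert (C ∪ D) (((U ∪ M).erase C).erase D) := by
    ext X
    have := not_merged C hC
    have := not_merged D hD
    simp only [mem_union, mem_erase, mem_insert]
    grind
  have hCD_new : C ∪ D ∉ M := fun hM => by
    have hne : C ≠ C ∪ D := fun hC' => by
      have := h.card_merged _ hM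
      rw [← hC', h.card_unmerged C hC] at this
      omega
    have hdisj : Disjoint C (C ∪ D) :=
      h.components.pairwiseDisjoint (mem_union_left M hC) (mem_union_right U hM) hne
    obtain ⟨c, hc⟩ := card_pos.mp ((h.card_unmerged C hC).symm ▸ hs)
    exact disjoint_left.mp hdisj hc (mem_union_left D hc)
  refine ⟨⟨?_, fun X hX => h.card_unmerged X (mem_of_mem_erase (mem_of_mem_erase hX)), ?_⟩,
    card_insert_of_notMem hCD_new⟩
  · rw [hunion]
    exact h.components.merge (mem_union_left M hC) (mem_union_left M hD) hσ hedges hlink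
  · intro X hX
    rcases mem_insert.mp hX with rfl | hX
    · have hdisj : Disjoint C D :=
        h.components.pairwiseDisjoint (mem_union_left M hC) (mem_union_left M hD) hCD
      rw [card_union_of_disjoint hdisj, h.card_unmerged C hC, h.card_unmerged D hD, two_mul]
    · exact h.card_merged X hX

lemma deficit_nonpos (h : LevelInv s U M σ) (hs : 0 < s) {ε δ : ℝ} (hδ : 0 ≤ δ) {f : Fin n → Fin 2}
    (hf : validCap ε f) {j : Fin 2} (hlight : ∀ C ∈ U, (load f j C : ℝ) ≤ δ * s) :
    (1 - ε) * n / 2 - δ * n - 2 * s * #M ≤ 0 := by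
  have hsplit : (load f j univ : ℝ) = ∑ C ∈ U, (load f j C : ℝ) + ∑ C ∈ M, (load f j C : ℝ) := by
    rw [h.components.load_univ, sum_union (h.disjoint hs)]
    push_cast
    rfl
  have hU : ∑ C ∈ U, (load f j C : ℝ) ≤ δ * n := by
    have hsU : (s * #U : ℝ) ≤ n := by exact_mod_cast h.mul_card_le
    calc ∑ C ∈ U, (load f j C : ℝ) ≤ ∑ _C ∈ U, δ * s := sum_le_sum hlight
      _ = δ * (s * #U) := by rw [sum_const, nsmul_eq_mul]; ring
      _ ≤ δ * n := mul_le_mul_of_nonneg_left hsU hδ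
  have hM : ∑ C ∈ M, (load f j C : ℝ) ≤ 2 * s * #M := by
    calc ∑ C ∈ M, (load f j C : ℝ) ≤ ∑ C ∈ M, (#C : ℝ) :=
          sum_le_sum fun C _ => by exact_mod_cast card_filter_le C _
      _ = 2 * s * #M := by
          rw [sum_congr rfl fun C hC => congrArg (Nat.cast (R := ℝ)) (h.card_merged C hC),
            sum_const, nsmul_eq_mul]
          push_cast
          ring
  linarith [load_ge_of_validCap hf j]

end LevelInv

end Level

section Adversary

def IsPaidPair (θ : ℝ) (f : Fin n → Fin 2) (C D : Finset (Fin n)) : Prop :=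
  θ ≤ load f 1 C ∧ θ ≤ load f 0 D

lemma exists_light_of_not_isPaidPair {θ : ℝ} {s : ℕ} {U : Finset (Finset (Fin n))}
    {f : Fin n → Fin 2} (hU : ∀ C ∈ U, #C = s) (hθ : θ + θ ≤ s) (hU₂ : 1 < #U)
    (hunpaid : ¬ ∃ C ∈ U, ∃ D ∈ U, C ≠ D ∧ IsPaidPair θ f C D) :
    ∃ j, ∀ C ∈ U, (load f j C : ℝ) ≤ θ := by
  by_contra! hheavy
  obtain ⟨C, hC, hC₁⟩ := hheavy 1
  obtain ⟨D, hD, hD₀⟩ := hheavy 0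
  by_cases hCD : C = D
  · subst hCD
    obtain ⟨E, hE, hEC⟩ := exists_mem_ne hU₂ C
    have hsum : (load f 0 E : ℝ) + load f 1 E = s := by
      exact_mod_cast (load_zero_add_load_one f E).trans (hU E hE)
    by_cases hE₀ : θ ≤ load f 0 E
    · exact hunpaid ⟨C, hC, E, hE, hEC.symm, hC₁.le, hE₀⟩
    · exact hunpaid ⟨E, hE, C, hC, hEC, by linarith, hD₀.le⟩
  · exact hunpaid ⟨C, hC, D, hD, hCD, hC₁.le, hD₀.le⟩

open Classical in
noncomputable def pickPair (θ : ℝ) (f : Fin n → Fin 2) (U : Finset (Finset (Fin n))) :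
    Finset (Fin n) × Finset (Fin n) :=
  if h : ∃ p : Finset (Fin n) × Finset (Fin n),
      p.1 ∈ U ∧ p.2 ∈ U ∧ p.1 ≠ p.2 ∧ IsPaidPair θ f p.1 p.2 then h.choose
  else if h' : ∃ p : Finset (Fin n) × Finset (Fin n), p.1 ∈ U ∧ p.2 ∈ U ∧ p.1 ≠ p.2 then
    h'.choose
  else (∅, ∅)

lemma pickPair_spec {θ : ℝ} {f : Fin n → Fin 2} {U : Finset (Finset (Fin n))} (hU₂ : 1 < #U) :
    (pickPair θ f U).1 ∈ U ∧ (pickPair θ f U).2 ∈ U ∧ (pickPair θ f U).1 ≠ (pickPair θ f U).2 := by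
  obtain ⟨C, hC, D, hD, hCD⟩ := one_lt_card.mp hU₂
  have h' : ∃ p : Finset (Fin n) × Finset (Fin n), p.1 ∈ U ∧ p.2 ∈ U ∧ p.1 ≠ p.2 :=
    ⟨(C, D), hC, hD, hCD⟩
  rw [pickPair]
  split_ifs with h
  · exact ⟨h.choose_spec.1, h.choose_spec.2.1, h.choose_spec.2.2.1⟩
  · exact h'.choose_spec

lemma isPaidPair_pickPair {θ : ℝ} {f : Fin n → Fin 2} {U : Finset (Finset (Fin n))}
    (hpaid : ∃ C ∈ U, ∃ D ∈ U, C ≠ D ∧ IsPaidPair θ f C D) :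
    IsPaidPair θ f (pickPair θ f U).1 (pickPair θ f U).2 := by
  obtain ⟨C, hC, D, hD, hCD, hCDpaid⟩ := hpaid
  have h : ∃ p : Finset (Fin n) × Finset (Fin n),
      p.1 ∈ U ∧ p.2 ∈ U ∧ p.1 ≠ p.2 ∧ IsPaidPair θ f p.1 p.2 := ⟨(C, D), hC, hD, hCD, hCDpaid⟩
  rw [pickPair, dif_pos h]
  exact h.choose_spec.2.2.2

variable (A : OnlineAlg n 2) (a0 : Fin n → Fin 2)

noncomputable def mergeRequests (T : ℕ) (C D : Finset (Fin n)) (σ : List (Fin n × Fin n)) :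
    List (Fin n × Fin n) :=
  hammer A a0 (C ∪ D) T σ ++ (C ×ˢ D).toList

noncomputable def runLevel (α θ : ℝ) :
    ℕ → Finset (Finset (Fin n)) → Finset (Finset (Fin n)) → List (Fin n × Fin n) →
      Finset (Finset (Fin n)) × List (Fin n × Fin n)
  | 0, _, M, σ => (M, σ)
  | f + 1, U, M, σ =>
    let p := pickPair θ (stateAfter A a0 σ) U
    runLevel α θ f ((U.erase p.1).erase p.2) (insert (p.1 ∪ p.2) M)
      (mergeRequests A a0 ⌈α * θ⌉₊ p.1 p.2 σ)

noncomputable def adversary (α δ : ℝ) : ℕ → Finset (Finset (Fin n)) × List (Fin n × Fin n)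
  | 0 => (univ.image fun v => {v}, [])
  | k + 1 =>
    runLevel A a0 α (δ * (2 ^ k : ℕ)) (#(adversary α δ k).1 / 2) (adversary α δ k).1 ∅
      (adversary α δ k).2

variable {A a0}

lemma prefix_mergeRequests (T : ℕ) (C D : Finset (Fin n)) (σ : List (Fin n × Fin n)) :
    σ <+: mergeRequests A a0 T C D σ :=
  (prefix_hammer _ T σ).trans (List.prefix_append _ _)

lemma mem_mergeRequests {T : ℕ} {C D : Finset (Fin n)} {σ : List (Fin n × Fin n)}
    {e : Fin n × Fin n} (he : e ∈ mergeRequests A a0 T C D σ) :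
    e ∈ σ ∨ e.1 ∈ C ∪ D ∧ e.2 ∈ C ∪ D := by
  rcases List.mem_append.mp he with he | he
  · exact mem_hammer he
  · obtain ⟨h₁, h₂⟩ := mem_product.mp (mem_toList.mp he)
    exact Or.inr ⟨mem_union_left D h₁, mem_union_right C h₂⟩

lemma sameComp_mergeRequests (T : ℕ) {C D : Finset (Fin n)} (σ : List (Fin n × Fin n))
    {c d : Fin n} (hc : c ∈ C) (hd : d ∈ D) : sameComp (mergeRequests A a0 T C D σ) c d :=
  .rel _ _ (Or.inl (List.mem_append_right _ (mem_toList.mpr (mem_product.mpr ⟨hc, hd⟩))))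

lemma algCost_mergeRequests {α θ : ℝ} (hα : 0 ≤ α) {T : ℕ} (hT : α * θ ≤ T)
    {C D : Finset (Fin n)} {σ : List (Fin n × Fin n)}
    (hpaid : IsPaidPair θ (stateAfter A a0 σ) C D) :
    algCost α A a0 σ + α * θ ≤ algCost α A a0 (mergeRequests A a0 T C D σ) := by
  have hmin : α * θ ≤ min (T : ℝ) (α * (min (load (stateAfter A a0 σ) 0 (C ∪ D))
      (load (stateAfter A a0 σ) 1 (C ∪ D)) : ℕ)) := by
    refine le_min hT (mul_le_mul_of_nonneg_left ?_ hα)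
    push_cast
    exact le_min (hpaid.2.trans (by exact_mod_cast load_mono _ _ subset_union_right))
      (hpaid.1.trans (by exact_mod_cast load_mono _ _ subset_union_left))
  have hlink : algCost α A a0 (hammer A a0 (C ∪ D) T σ) ≤
      algCost α A a0 (mergeRequests A a0 T C D σ) :=
    algCost_mono hα (List.prefix_append _ _)
  linarith [algCost_hammer (A := A) (a0 := a0) hα (C ∪ D) T σ]

lemma LevelInv.mergeRequests {s : ℕ} {U M : Finset (Finset (Fin n))} {σ : List (Fin n × Fin n)}
    (h : LevelInv s U M σ) (hs : 0 < s) (T : ℕ) {C D : Finset (Fin n)} (hC : C ∈ U)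
    (hD : D ∈ U) (hCD : C ≠ D) :
    LevelInv s ((U.erase C).erase D) (insert (C ∪ D) M) (mergeRequests A a0 T C D σ) ∧
      #(insert (C ∪ D) M) = #M + 1 := by
  obtain ⟨c, hc⟩ := card_pos.mp ((h.card_unmerged C hC).symm ▸ hs)
  obtain ⟨d, hd⟩ := card_pos.mp ((h.card_unmerged D hD).symm ▸ hs)
  exact h.merge hs hC hD hCD (prefix_mergeRequests T C D σ).subset (fun _ => mem_mergeRequests)
    ⟨c, hc, d, hd, sameComp_mergeRequests T σ hc hd⟩

lemma card_erase_erase_pickPair {θ : ℝ} {f : Fin n → Fin 2} {U : Finset (Finset (Fin n))}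
    (hU₂ : 1 < #U) : #((U.erase (pickPair θ f U).1).erase (pickPair θ f U).2) + 2 = #U := by
  obtain ⟨hC, hD, hCD⟩ := pickPair_spec (θ := θ) (f := f) hU₂
  rw [card_erase_of_mem (mem_erase.mpr ⟨hCD.symm, hD⟩), card_erase_of_mem hC]
  omega

lemma prefix_runLevel (α θ : ℝ) (f : ℕ) (U M : Finset (Finset (Fin n)))
    (σ : List (Fin n × Fin n)) : σ <+: (runLevel A a0 α θ f U M σ).2 := by
  induction f generalizing U M σ with
  | zero => exact List.prefix_refl σ
  | succ f ih => exact (prefix_mergeRequests _ _ _ σ).trans (ih _ _ _)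

lemma LevelInv.runLevel {α θ : ℝ} {s : ℕ} (hs : 0 < s) (f : ℕ) {U M : Finset (Finset (Fin n))}
    {σ : List (Fin n × Fin n)} (h : LevelInv s U M σ) (hU : #U = 2 * f) :
    LevelInv (2 * s) (runLevel A a0 α θ f U M σ).1 ∅ (runLevel A a0 α θ f U M σ).2 := by
  induction f generalizing U M σ with
  | zero => exact (card_eq_zero.mp hU ▸ h).next
  | succ f ih =>
    have hU₂ : 1 < #U := by omega
    obtain ⟨hC, hD, hCD⟩ := pickPair_spec (θ := θ) (f := stateAfter A a0 σ) hU₂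
    have hcard := card_erase_erase_pickPair (θ := θ) (f := stateAfter A a0 σ) hU₂
    exact ih (h.mergeRequests (A := A) (a0 := a0) hs _ hC hD hCD).1 (by omega)

/-- The potential `(1 - ε) n / 2 - δ n - 2 s |M|` drops by `2 s` per merge; a paid merge costs
the algorithm `α δ s`, and once no paid pair is left the potential is nonpositive. -/
lemma algCost_runLevel {α δ ε : ℝ} (hα : 0 ≤ α) (hδ : 0 ≤ δ) (hδ' : δ + δ ≤ 1) {s : ℕ}
    (hs : 0 < s) (f : ℕ) {U M : Finset (Finset (Fin n))} {σ : List (Fin n × Fin n)}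
    (h : LevelInv s U M σ) (hU : #U = 2 * f)
    (hvalid : ∀ ρ, ρ <+: (runLevel A a0 α (δ * s) f U M σ).2 → validCap ε (stateAfter A a0 ρ)) :
    algCost α A a0 σ + α * δ * ((1 - ε) * n / 2 - δ * n - 2 * s * #M) / 2 ≤
      algCost α A a0 (runLevel A a0 α (δ * s) f U M σ).2 := by
  have hαδ := mul_nonneg hα hδ
  induction f generalizing U M σ with
  | zero =>
    have := h.deficit_nonpos hs hδ (hvalid σ (prefix_runLevel ..)) (j := 0)
      (by simp [card_eq_zero.mp hU])
    have : α * δ * ((1 - ε) * n / 2 - δ * n - 2 * s * #M) / 2 ≤ 0 := by nlinarith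
    exact (add_le_of_nonpos_right this).trans le_rfl
  | succ f ih =>
    have hU₂ : 1 < #U := by omega
    obtain ⟨hC, hD, hCD⟩ := pickPair_spec (θ := δ * s) (f := stateAfter A a0 σ) hU₂
    have hcard := card_erase_erase_pickPair (θ := δ * s) (f := stateAfter A a0 σ) hU₂
    obtain ⟨hL', hM'⟩ := h.mergeRequests (A := A) (a0 := a0) hs ⌈α * (δ * s)⌉₊ hC hD hCD
    have ih' := ih hL' (by omega) hvalid
    rw [hM', Nat.cast_add, Nat.cast_one] at ih'
    by_cases hpaid : ∃ C ∈ U, ∃ D ∈ U, C ≠ D ∧ IsPaidPair (δ * s) (stateAfter A a0 σ) C D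
    · have := algCost_mergeRequests hα (Nat.le_ceil _) (isPaidPair_pickPair hpaid)
      dsimp only [runLevel]
      linarith
    · obtain ⟨j, hj⟩ := exists_light_of_not_isPaidPair h.card_unmerged
        (by nlinarith [(Nat.cast_pos.mpr hs : (0 : ℝ) < s)]) hU₂ hpaid
      have := h.deficit_nonpos hs hδ (hvalid σ (prefix_runLevel ..)) hj
      have : α * δ * ((1 - ε) * n / 2 - δ * n - 2 * s * #M) / 2 ≤ 0 := by nlinarith
      have : algCost α A a0 σ ≤ algCost α A a0 (runLevel A a0 α (δ * s) (f + 1) U M σ).2 :=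
        algCost_mono hα (prefix_runLevel ..)
      linarith

lemma LevelInv.card_eq_pow {a k : ℕ} (hn : n = 2 ^ a) (hk : k ≤ a)
    {P : Finset (Finset (Fin n))} {σ : List (Fin n × Fin n)} (h : LevelInv (2 ^ k) P ∅ σ) :
    #P = 2 ^ (a - k) :=
  Nat.eq_of_mul_eq_mul_left (Nat.two_pow_pos k) (by rw [h.mul_card, hn, ← pow_add,
    Nat.add_sub_cancel' hk])

lemma levelInv_adversary {a : ℕ} (hn : n = 2 ^ a) (α δ : ℝ) :
    ∀ k ≤ a, LevelInv (2 ^ k) (adversary A a0 α δ k).1 ∅ (adversary A a0 α δ k).2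
  | 0, _ => LevelInv.of_isComponents IsComponents.singletons (by simp [adversary])
  | k + 1, hk => by
    have ih := levelInv_adversary hn α δ k (by omega)
    rw [pow_succ']
    refine LevelInv.runLevel (Nat.two_pow_pos k) _ ih ?_
    rw [Nat.two_mul_div_two_of_even]
    rw [ih.card_eq_pow hn (by omega)]
    exact Nat.even_pow.mpr ⟨even_two, by omega⟩

lemma prefix_adversary (α δ : ℝ) {k K : ℕ} (hk : k ≤ K) :
    (adversary A a0 α δ k).2 <+: (adversary A a0 α δ K).2 := by
  induction K, hk using Nat.le_induction with
  | base => exact List.prefix_refl _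
  | succ K _ ih => exact ih.trans (prefix_runLevel ..)

lemma algCost_adversary {a : ℕ} (hn : n = 2 ^ a) {α δ ε : ℝ} (hα : 0 ≤ α) (hδ : 0 ≤ δ)
    (hδ' : δ + δ ≤ 1) {K : ℕ} (hK : K ≤ a)
    (hvalid : ∀ ρ, ρ <+: (adversary A a0 α δ K).2 → validCap ε (stateAfter A a0 ρ)) :
    ∀ k ≤ K, k * (α * δ * ((1 - ε) * n / 2 - δ * n) / 2) ≤
      algCost α A a0 (adversary A a0 α δ k).2 := by
  intro k hk
  induction k with
  | zero => simp [adversary, algCost_nil]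
  | succ k ih =>
    have hL := levelInv_adversary (A := A) (a0 := a0) hn α δ k (by omega)
    have hlevel := algCost_runLevel hα hδ hδ' (Nat.two_pow_pos k) _ hL
      (Nat.two_mul_div_two_of_even (by
        rw [hL.card_eq_pow hn (by omega)]
        exact Nat.even_pow.mpr ⟨even_two, by omega⟩)).symm
      fun ρ hρ => hvalid ρ (hρ.trans (prefix_adversary α δ hk))
    rw [card_empty, Nat.cast_zero, mul_zero, sub_zero] at hlevel
    rw [adversary, Nat.cast_succ]
    linarith [ih (by omega)]

end Adversary

section Instance

def halves (n : ℕ) : Fin n → Fin 2 := fun v => if (v : ℕ) < n / 2 then 0 else 1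

lemma card_halves (hn : Even n) (j : Fin 2) : #{v | halves n v = j} = n / 2 := by
  have h₀ : load (halves n) 0 univ = n / 2 := by
    simp [load, halves, Fin.card_filter_val_lt, Nat.div_le_self]
  have h₁ := load_zero_add_load_one (halves n) univ
  rw [card_univ, Fintype.card_fin] at h₁
  obtain ⟨m, rfl⟩ := hn
  fin_cases j
  · exact h₀
  · show load (halves (m + m)) 1 univ = (m + m) / 2
    omega

lemma exists_reInstance {σ : List (Fin n × Fin n)} {P : Finset (Finset (Fin n))}
    (hP : IsComponents σ P) (hP₂ : #P = 2) (hcard : ∀ C ∈ P, #C = n / 2)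
    {a0 : Fin n → Fin 2} (ha0 : ∀ j, #{v | a0 v = j} = n / 2) :
    ∃ I : ReInstance n 2, I.init = a0 ∧ I.sigma = σ := by
  classical
  obtain ⟨C₀, C₁, hne, rfl⟩ := card_eq_two.mp hP₂
  let B : Fin 2 → Finset (Fin n) := ![C₀, C₁]
  have hB : ∀ j, B j ∈ ({C₀, C₁} : Finset (Finset (Fin n))) := by
    intro j; fin_cases j <;> simp [B]
  let truth : Fin n → Fin 2 := fun v => if v ∈ C₀ then 0 else 1
  have hC₁ : ∀ v, v ∈ C₁ ↔ v ∉ C₀ := fun v => by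
    have hdisj : Disjoint C₀ C₁ := hP.pairwiseDisjoint (by simp) (by simp) hne
    obtain ⟨C, hC, hv⟩ := hP.cover v
    rcases mem_insert.mp hC with rfl | hC
    · exact iff_of_false (disjoint_left.mp hdisj hv) (not_not.mpr hv)
    · rw [mem_singleton.mp hC] at hv
      exact iff_of_true hv (disjoint_right.mp hdisj hv)
  have htruth : ∀ v j, truth v = j ↔ v ∈ B j := by
    intro v j
    fin_cases j <;> by_cases h₀ : v ∈ C₀ <;> simp [truth, B, h₀, hC₁]
  have hreveals : ∀ u v, sameComp σ u v ↔ truth u = truth v := fun u v => by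
    rw [hP.sameComp_iff (hB (truth u)) ((htruth u _).mp rfl) v, ← htruth, eq_comm]
  refine ⟨⟨truth, a0, σ, fun j => ?_, ha0, fun e he => ?_, hreveals⟩, rfl, rfl⟩
  · rw [← hcard (B j) (hB j)]
    congr 1
    ext v
    simp [htruth]
  · exact (hreveals _ _).mp (.rel _ _ (Or.inl he))

lemma OPTcost_le (I : ReInstance n ℓ) {α ε : ℝ} (hα : 0 ≤ α) (hε : 0 ≤ ε) :
    OPTcost α ε I ≤ α * n := by
  have hvalid : validCap ε I.truth := fun j => by
    rw [I.truth_size j]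
    calc ((n / ℓ : ℕ) : ℝ) ≤ n / ℓ := Nat.cast_div_le
      _ ≤ (1 + ε) * n / ℓ := by
        rw [mul_div_assoc]
        exact le_mul_of_one_le_left (by positivity) (by linarith)
  have hcomm : schedComm I.sigma (fun _ => I.truth) = 0 :=
    sum_eq_zero fun t _ => if_neg (not_not.mpr (I.edges_within _ (List.get_mem _ t)))
  have hmoves : schedMoves I.init I.sigma (fun _ => I.truth) ≤ n := by
    simp only [schedMoves, movesBetween_eq_hammingDist, hammingDist_self, sum_const_zero,
      add_zero]
    exact (hammingDist_le_card_fintype).trans (Fintype.card_fin n).le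
  calc OPTcost α ε I ≤ α * schedMoves I.init I.sigma (fun _ => I.truth) +
        schedComm I.sigma (fun _ => I.truth) :=
        csInf_le ⟨0, by rintro _ ⟨g, -, -, rfl⟩; positivity⟩
          ⟨fun _ => I.truth, fun _ => hvalid, fun _ _ => Iff.rfl, rfl⟩
    _ ≤ α * n := by
        rw [hcomm, Nat.cast_zero, add_zero]
        exact mul_le_mul_of_nonneg_left (by exact_mod_cast hmoves) hα

end Instance

lemma const_mul_logb_le_levels_mul_levelCost {a n : ℕ} (ha : 2 ≤ a) (hn : n = 2 ^ a)
    {α ε : ℝ} (hα : 0 ≤ α) (hε : ε ≤ 0.98) :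
    1 / 200000 * (α * n * Real.logb 2 n) ≤
      ((a - 1 : ℕ) : ℝ) * (α * (1 / 200) * ((1 - ε) * n / 2 - 1 / 200 * n) / 2) := by
  have hlog : Real.logb 2 n = a := by
    rw [hn, Nat.cast_pow, Nat.cast_ofNat, Real.logb_pow, Real.logb_self_eq_one (by norm_num),
      mul_one]
  have hαn : 0 ≤ α * n := mul_nonneg hα (Nat.cast_nonneg n)
  have hgain : α * n / 80000 ≤ α * (1 / 200) * ((1 - ε) * n / 2 - 1 / 200 * n) / 2 := by
    nlinarith
  have hlevels : (a : ℝ) / 2 ≤ ((a - 1 : ℕ) : ℝ) := by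
    have : (2 : ℝ) ≤ a := by exact_mod_cast ha
    rw [Nat.cast_sub (by omega), Nat.cast_one]
    linarith
  rw [hlog]
  calc 1 / 200000 * (α * n * a) ≤ (a / 2) * (α * n / 80000) := by
        nlinarith [mul_nonneg hαn (Nat.cast_nonneg a : (0 : ℝ) ≤ a)]
    _ ≤ _ := mul_le_mul hlevels hgain (by positivity) (by positivity)

end ReEmbedding

open ReEmbedding

/-- **Ω(log n) lower bound.** There is a universal constant `c > 0` such
that for two servers of capacity `(1+ε)·n/2`, where `0 < ε ≤ 0.98` and `n = 2^a` is a
sufficiently large power of two (`a ≥ 1000`): for every deterministic online algorithm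
that always maintains a valid assignment (and ends with each ground-truth component
alone on one server), there is an instance on which the algorithm's total cost is at
least `c·α·n·log₂ n` while the optimal offline cost is at most `α·n`. Hence every
deterministic online algorithm is `Ω(log n)`. -/
theorem stmt12 :
    ∃ c : ℝ, 0 < c ∧
      ∀ (a n : ℕ) (α ε : ℝ), 1000 ≤ a → n = 2 ^ a → 1 < α → 0 < ε → ε ≤ 0.98 →
        ∀ A : OnlineAlg n 2,
          (∀ I : ReInstance n 2,
            (∀ t, validCap ε (state A I.init I.sigma t)) ∧
            isPerfect I.truth (state A I.init I.sigma I.sigma.length)) →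
          ∃ I : ReInstance n 2,
            c * (α * n * Real.logb 2 n) ≤ algCost α A I.init I.sigma ∧
            OPTcost α ε I ≤ α * n := by
  refine ⟨1 / 200000, by norm_num, fun a n α ε ha hn hα hε hε' A hA => ?_⟩
  have hα₀ : 0 ≤ α := by linarith
  have hL := levelInv_adversary (A := A) (a0 := halves n) hn α (1 / 200) (a - 1) (by omega)
  have hhalf : n / 2 = 2 ^ (a - 1) := by
    rw [hn, ← Nat.pow_div (by omega) two_pos, pow_one]
  obtain ⟨I, hinit, hσ⟩ := exists_reInstance hL.isComponents
    (by rw [hL.card_eq_pow hn (by omega), Nat.sub_sub_self (by omega), pow_one])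
    (fun C hC => (hL.card_unmerged C hC).trans hhalf.symm)
    (card_halves (hn ▸ Nat.even_pow.mpr ⟨even_two, by omega⟩))
  have hvalid : ∀ ρ, ρ <+: I.sigma → validCap ε (stateAfter A I.init ρ) := fun ρ hρ => by
    rw [stateAfter_eq_state_of_prefix hρ]
    exact (hA I).1 _
  rw [hinit, hσ] at hvalid
  refine ⟨I, ?_, OPTcost_le I hα₀ hε.le⟩
  rw [hinit, hσ]
  exact (const_mul_logb_le_levels_mul_levelCost (by omega) hn hα₀ hε').trans
    (algCost_adversary hn hα₀ (by norm_num) (by norm_num) (by omega) hvalid _ le_rfl)
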